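/- Let G be a finite group such that for every proper subgroup M of G, any two Carter subgroups of M are conjugate in M. If H is a Carter subgroup of G and N is a normal subgroup of G, then the image of H under the canonical projection G → G/N is a Carter subgroup of G/N. -/

import Mathlib

/-! Let `π : G → G ⧸ N` and `M = π⁻¹(π H) = H N`. The image `π H` is nilpotent, and since `π`
is surjective, `N(π H) = π (N_G(M))`; so it suffices that `M` is self-normalizing. This is clear
if `M = G`. Otherwise Carter subgroups of `M` are conjugate in `M`, and for `k ∈ N_G(M)` both `H`
and `k H k⁻¹` are Carter subgroups of `M`, so the Frattini argument gives
`N_G(M) = M · N_G(H) = M · H = M`. -/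

/-- A Carter subgroup: a nilpotent self-normalizing subgroup. -/
def IsCarterSubgroup {G : Type*} [Group G] (H : Subgroup G) : Prop :=
  Group.IsNilpotent H ∧ Subgroup.normalizer (H : Set G) = H

def CarterSubgroupsConjugate (G : Type*) [Group G] : Prop :=
  ∀ H₁ H₂ : Subgroup G, IsCarterSubgroup H₁ → IsCarterSubgroup H₂ →
    ∃ g : G, H₂ = H₁.map (MulAut.conj g).toMonoidHom

namespace Subgroup

variable {G G' : Type*} [Group G] [Group G']

open scoped Pointwise in
theorem map_conj_mul (H : Subgroup G) (a b : G) :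
    H.map (MulAut.conj (a * b)).toMonoidHom =
      (H.map (MulAut.conj b).toMonoidHom).map (MulAut.conj a).toMonoidHom := by
  rw [map_mul]
  exact mul_smul (MulAut.conj a) (MulAut.conj b) H

instance isNilpotent_map (H : Subgroup G) [Group.IsNilpotent H] (f : G →* G') :
    Group.IsNilpotent (H.map f) :=
  Group.nilpotent_of_surjective _ (f.subgroupMap_surjective H)

theorem map_conj_subgroupOf (H M : Subgroup G) (m : M) :
    (H.subgroupOf M).map (MulAut.conj m).toMonoidHom =
      (H.map (MulAut.conj (m : G)).toMonoidHom).subgroupOf M := by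
  ext x
  simp only [mem_map, mem_subgroupOf, MulEquiv.coe_toMonoidHom, MulAut.conj_apply,
    Subtype.ext_iff, coe_mul, coe_inv]
  constructor
  · rintro ⟨y, hy, hyx⟩
    exact ⟨y, hy, hyx⟩
  · rintro ⟨y, hy, hyx⟩
    have hy_eq : y = (m : G)⁻¹ * x * m := by rw [← hyx]; group
    exact ⟨⟨y, hy_eq ▸ M.mul_mem (M.mul_mem (M.inv_mem m.2) x.2) m.2⟩, hy, hyx⟩

theorem map_conj_le_of_mem_normalizer {H M : Subgroup G} {k : G} (hHM : H ≤ M)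
    (hk : k ∈ normalizer (M : Set G)) : H.map (MulAut.conj k).toMonoidHom ≤ M := by
  rw [mem_normalizer_iff_map_conj_eq] at hk
  exact hk ▸ map_mono hHM

/-- Frattini argument: `N_G(M) = M · N_G(H)`. -/
theorem normalizer_le_of_forall_map_conj {H M : Subgroup G} (hH : normalizer (H : Set G) = H)
    (hHM : H ≤ M) (hconj : ∀ k ∈ normalizer (M : Set G), ∃ m ∈ M,
      H.map (MulAut.conj k).toMonoidHom = H.map (MulAut.conj m).toMonoidHom) :
    normalizer (M : Set G) ≤ M := by
  intro k hk
  obtain ⟨m, hm, hkm⟩ := hconj k hk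
  have hmk : m⁻¹ * k ∈ normalizer (H : Set G) := by
    rw [mem_normalizer_iff_map_conj_eq, ← MulEquiv.toMonoidHom_eq_coe, map_conj_mul, hkm,
      ← map_conj_mul, inv_mul_cancel, map_one]
    exact map_id H
  simpa using M.mul_mem hm (hHM (hH ▸ hmk) : m⁻¹ * k ∈ M)

end Subgroup

open Subgroup

namespace IsCarterSubgroup

variable {G G' : Type*} [Group G] [Group G'] {H M : Subgroup G}

theorem subgroupOf (hH : IsCarterSubgroup H) (hHM : H ≤ M) :
    IsCarterSubgroup (H.subgroupOf M) := by
  have : Group.IsNilpotent H := hH.1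
  refine ⟨Group.nilpotent_of_surjective (subgroupOfEquivOfLe hHM).symm.toMonoidHom
    (subgroupOfEquivOfLe hHM).symm.surjective, ?_⟩
  rw [← subgroupOf_normalizer_eq hHM, hH.2]

theorem map_equiv (hH : IsCarterSubgroup H) (e : G ≃* G') :
    IsCarterSubgroup (H.map e.toMonoidHom) := by
  have : Group.IsNilpotent H := hH.1
  refine ⟨inferInstance, ?_⟩
  rw [← map_equiv_normalizer_eq H e, hH.2]

theorem normalizer_eq_of_le (hH : IsCarterSubgroup H) (hHM : H ≤ M)
    (hM : CarterSubgroupsConjugate M) : normalizer (M : Set G) = M := by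
  refine le_antisymm (normalizer_le_of_forall_map_conj hH.2 hHM fun k hk => ?_) le_normalizer
  have hkHM := map_conj_le_of_mem_normalizer hHM hk
  obtain ⟨m, hm⟩ := hM _ _ (hH.subgroupOf hHM) ((hH.map_equiv (MulAut.conj k)).subgroupOf hkHM)
  refine ⟨m, m.2, ?_⟩
  rwa [map_conj_subgroupOf, subgroupOf_inj, inf_eq_left.mpr hkHM,
    inf_eq_left.mpr (map_conj_le_of_mem_normalizer hHM (le_normalizer m.2))] at hm

end IsCarterSubgroup

theorem carter_image_of_proper_conjugacy_general {G : Type*} [Group G]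
    (hprop : ∀ M : Subgroup G, M ≠ ⊤ →
      ∀ H₁ H₂ : Subgroup M, IsCarterSubgroup H₁ → IsCarterSubgroup H₂ →
        ∃ m : M, H₂ = H₁.map (MulAut.conj m).toMonoidHom)
    (H N : Subgroup G) [N.Normal] (hH : IsCarterSubgroup H) :
    IsCarterSubgroup (H.map (QuotientGroup.mk' N)) := by
  set π := QuotientGroup.mk' N
  have hπ : Function.Surjective π := QuotientGroup.mk'_surjective N
  set M := (H.map π).comap π
  have hM : normalizer (M : Set G) = M := by
    by_cases htop : M = ⊤
    · rw [htop]
      exact normalizer_eq_top (H := (⊤ : Subgroup G))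
    · exact hH.normalizer_eq_of_le (le_comap_map π H) (hprop M htop)
  have : Group.IsNilpotent H := hH.1
  refine ⟨inferInstance, ?_⟩
  calc normalizer (H.map π : Set (G ⧸ N))
      = (normalizer (M : Set G)).map π := by
        rw [← comap_normalizer_eq_of_surjective (H.map π) hπ,
          map_comap_eq_self_of_surjective hπ]
    _ = H.map π := by rw [hM, map_comap_eq_self_of_surjective hπ]

/-- If Carter subgroups of every proper subgroup of a finite group `G` are conjugate, then the
image of a Carter subgroup of `G` in any quotient of `G` is a Carter subgroup. -/
theorem carter_image_of_proper_conjugacy {G : Type*} [Group G] [Finite G]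
    (hprop : ∀ M : Subgroup G, M ≠ ⊤ →
      ∀ H₁ H₂ : Subgroup M, IsCarterSubgroup H₁ → IsCarterSubgroup H₂ →
        ∃ m : M, H₂ = H₁.map (MulAut.conj m).toMonoidHom)
    (H N : Subgroup G) [N.Normal] (hH : IsCarterSubgroup H) :
    IsCarterSubgroup (H.map (QuotientGroup.mk' N)) :=
  carter_image_of_proper_conjugacy_general hprop H N hH
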